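/- arXiv:1710.08106 — 2 statements merged into one kernel-verified Lean document; each statement's English description precedes it below -/
import Mathlib

section
/- For every smooth function f : ℝ^d → ℝ, the intertwining identity A ∇(L f) = 𝕃_A (A ∇f) − M_A (A ∇f) holds pointwise on ℝ^d. -/
open Real MeasureTheory Matrix

noncomputable section

abbrev Euc (d : ℕ) := Fin d → ℝ

/-- partial derivative in direction `i`. -/
def pd {d : ℕ} (i : Fin d) (f : Euc d → ℝ) (x : Euc d) : ℝ :=
  fderiv ℝ f x (Pi.single i 1)

/-- Euclidean gradient. -/
def gradv {d : ℕ} (f : Euc d → ℝ) (x : Euc d) : Euc d := fun i => pd i f x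

/-- The diffusion operator `L f = Δ f - ∇V ⋅ ∇f`. -/
def Lop {d : ℕ} (V f : Euc d → ℝ) (x : Euc d) : ℝ :=
  (∑ i, pd i (pd i f) x) - gradv V x ⬝ᵥ gradv f x

/-- Hessian matrix. -/
def hessM {d : ℕ} (V : Euc d → ℝ) (x : Euc d) : Matrix (Fin d) (Fin d) ℝ :=
  Matrix.of fun i j => pd i (pd j V) x

/-- Componentwise application of `L` to a vector field. -/
def vecL {d : ℕ} (V : Euc d → ℝ) (F : Euc d → Euc d) (x : Euc d) : Euc d :=
  fun i => Lop V (fun y => F y i) x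

/-- Entrywise application of `L` to a matrix field. -/
def matL {d : ℕ} (V : Euc d → ℝ) (M : Euc d → Matrix (Fin d) (Fin d) ℝ) (x : Euc d) :
    Matrix (Fin d) (Fin d) ℝ :=
  Matrix.of fun i j => Lop V (fun y => M y i j) x

/-- Jacobian matrix of a vector field: `(jac H x) i j = ∂_j H_i (x)`. -/
def jac {d : ℕ} (H : Euc d → Euc d) (x : Euc d) : Matrix (Fin d) (Fin d) ℝ :=
  Matrix.of fun i j => pd j (fun y => H y i) x

/-- `(∇A⁻¹ ∇F)_i = ∑_{j,k} ∂_k (A⁻¹)_{i,j} ∂_k F_j`. -/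
def gAinvG {d : ℕ} (A : Euc d → Matrix (Fin d) (Fin d) ℝ) (F : Euc d → Euc d) (x : Euc d) :
    Euc d :=
  fun i => ∑ j, ∑ k, pd k (fun y => (A y)⁻¹ i j) x * pd k (fun y => F y j) x

/-- The operator `𝕃_A F = 𝕃 F + 2 A ∇A⁻¹ ∇F`. -/
def LA {d : ℕ} (V : Euc d → ℝ) (A : Euc d → Matrix (Fin d) (Fin d) ℝ) (F : Euc d → Euc d)
    (x : Euc d) : Euc d :=
  vecL V F x + (2 : ℝ) • (A x *ᵥ gAinvG A F x)

/-- The matrix field `M_A = A (∇²V) A⁻¹ - A (𝕃 A⁻¹)`. -/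
def MA {d : ℕ} (V : Euc d → ℝ) (A : Euc d → Matrix (Fin d) (Fin d) ℝ) (x : Euc d) :
    Matrix (Fin d) (Fin d) ℝ :=
  A x * hessM V x * (A x)⁻¹ - A x * matL V (fun y => (A y)⁻¹) x

/-- The Schrödinger-type operator `𝕃_A^{M_A} F = 𝕃_A F - M_A F`. -/
def LAM {d : ℕ} (V : Euc d → ℝ) (A : Euc d → Matrix (Fin d) (Fin d) ℝ) (F : Euc d → Euc d)
    (x : Euc d) : Euc d :=
  LA V A F x - MA V A x *ᵥ F x

/-- The matrix field `S = (A Aᵀ)⁻¹`. -/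
def Smat {d : ℕ} (A : Euc d → Matrix (Fin d) (Fin d) ℝ) (x : Euc d) :
    Matrix (Fin d) (Fin d) ℝ :=
  (A x * (A x)ᵀ)⁻¹

/-- The probability measure with density proportional to `e^{-V}`. -/
def gibbs {d : ℕ} (V : Euc d → ℝ) : Measure (Euc d) :=
  (ENNReal.ofReal (∫ x, Real.exp (-V x)))⁻¹ •
    MeasureTheory.volume.withDensity fun x => ENNReal.ofReal (Real.exp (-V x))

/-- Variance with respect to a measure. -/
def Var' {d : ℕ} (μ : Measure (Euc d)) (f : Euc d → ℝ) : ℝ :=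
  (∫ x, f x ^ 2 ∂μ) - (∫ x, f x ∂μ) ^ 2


/-! Put `F = A ∇f`, so that `∇f = A⁻¹ F`. Differentiating `L f` gives the Bochner commutation
`∇(L f) = 𝕃(∇f) - (∇²V) ∇f`, and the Leibniz rule for `L` gives
`𝕃(A⁻¹ F) = (𝕃A⁻¹) F + A⁻¹ 𝕃F + 2 ∇A⁻¹ ∇F`. Multiplying by `A` and using `A A⁻¹ = 1` yields
`A ∇(L f) = 𝕃F + 2 A ∇A⁻¹ ∇F - (A (∇²V) A⁻¹ - A 𝕃A⁻¹) F`. -/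

open scoped ContDiff

section PartialDerivatives

variable {d : ℕ}

lemma pd_add {f g : Euc d → ℝ} (hf : Differentiable ℝ f) (hg : Differentiable ℝ g) (i : Fin d) :
    pd i (fun y => f y + g y) = fun y => pd i f y + pd i g y := by
  ext y
  simp [pd, fderiv_fun_add (hf y) (hg y)]

lemma pd_sub {f g : Euc d → ℝ} (hf : Differentiable ℝ f) (hg : Differentiable ℝ g) (i : Fin d) :
    pd i (fun y => f y - g y) = fun y => pd i f y - pd i g y := by
  ext y
  simp [pd, fderiv_fun_sub (hf y) (hg y)]

lemma pd_mul {f g : Euc d → ℝ} (hf : Differentiable ℝ f) (hg : Differentiable ℝ g) (i : Fin d) :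
    pd i (fun y => f y * g y) = fun y => f y * pd i g y + pd i f y * g y := by
  ext y
  simp [pd, fderiv_fun_mul (hf y) (hg y), mul_comm]

lemma pd_sum {ι : Type*} (s : Finset ι) {F : ι → Euc d → ℝ}
    (hF : ∀ j ∈ s, Differentiable ℝ (F j)) (i : Fin d) :
    pd i (fun y => ∑ j ∈ s, F j y) = fun y => ∑ j ∈ s, pd i (F j) y := by
  ext y
  simp [pd, fderiv_fun_sum fun j hj => hF j hj y]

lemma contDiff_pd {n : WithTop ℕ∞} {f : Euc d → ℝ} (hf : ContDiff ℝ (n + 1) f) (i : Fin d) :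
    ContDiff ℝ n (pd i f) :=
  (hf.fderiv_right le_rfl).clm_apply contDiff_const

lemma differentiable_pd {f : Euc d → ℝ} (hf : ContDiff ℝ 2 f) (i : Fin d) :
    Differentiable ℝ (pd i f) :=
  (contDiff_pd hf i).differentiable one_ne_zero

lemma pd_pd_eq_fderiv_fderiv {f : Euc d → ℝ} (hf : ContDiff ℝ 2 f) (i j : Fin d) (x : Euc d) :
    pd i (pd j f) x = fderiv ℝ (fderiv ℝ f) x (Pi.single i 1) (Pi.single j 1) := by
  have hf' : Differentiable ℝ (fderiv ℝ f) :=
    (hf.fderiv_right (m := 1) (by norm_num)).differentiable one_ne_zero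
  change fderiv ℝ (fun y => fderiv ℝ f y (Pi.single j 1)) x (Pi.single i 1) = _
  simp [fderiv_clm_apply (hf' x) (differentiableAt_const _)]

lemma pd_comm {f : Euc d → ℝ} (hf : ContDiff ℝ 2 f) (i j : Fin d) :
    pd i (pd j f) = pd j (pd i f) := by
  ext x
  rw [pd_pd_eq_fderiv_fderiv hf, pd_pd_eq_fderiv_fderiv hf]
  exact hf.contDiffAt.isSymmSndFDerivAt (by simp) _ _

end PartialDerivatives

section DiffusionOperator

variable {d : ℕ} (V : Euc d → ℝ)

lemma Lop_eq_sum (f : Euc d → ℝ) (x : Euc d) :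
    Lop V f x = ∑ i, (pd i (pd i f) x - pd i V x * pd i f x) := by
  simp [Lop, gradv, dotProduct, Finset.sum_sub_distrib]

lemma Lop_sum {ι : Type*} (s : Finset ι) {F : ι → Euc d → ℝ}
    (hF : ∀ j ∈ s, ContDiff ℝ 2 (F j)) (x : Euc d) :
    Lop V (fun y => ∑ j ∈ s, F j y) x = ∑ j ∈ s, Lop V (F j) x := by
  have hF' : ∀ j ∈ s, Differentiable ℝ (F j) :=
    fun j hj => (hF j hj).differentiable two_ne_zero
  simp only [Lop_eq_sum, pd_sum s hF', pd_sum s fun j hj => differentiable_pd (hF j hj) _,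
    Finset.mul_sum, ← Finset.sum_sub_distrib]
  exact Finset.sum_comm

lemma Lop_mul {u v : Euc d → ℝ} (hu : ContDiff ℝ 2 u) (hv : ContDiff ℝ 2 v) (x : Euc d) :
    Lop V (fun y => u y * v y) x
      = u x * Lop V v x + Lop V u x * v x + 2 * ∑ k, pd k u x * pd k v x := by
  have hu' := hu.differentiable two_ne_zero
  have hv' := hv.differentiable two_ne_zero
  simp only [Lop_eq_sum, Finset.mul_sum, Finset.sum_mul, ← Finset.sum_add_distrib]
  refine Finset.sum_congr rfl fun k _ => ?_
  rw [pd_mul hu' hv',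
    pd_add (hu'.fun_mul (differentiable_pd hv k)) ((differentiable_pd hu k).fun_mul hv'),
    pd_mul hu' (differentiable_pd hv k), pd_mul (differentiable_pd hu k) hv']
  ring

lemma pd_Lop {f : Euc d → ℝ} (hV : ContDiff ℝ 2 V) (hf : ContDiff ℝ 3 f) (i : Fin d) (x : Euc d) :
    pd i (Lop V f) x = Lop V (pd i f) x - ∑ k, pd i (pd k V) x * pd k f x := by
  have hf2 : ContDiff ℝ 2 f := hf.of_le (by norm_num)
  have hpdf : ∀ k, ContDiff ℝ 2 (pd k f) := fun k => contDiff_pd hf k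
  have hterm : ∀ k, Differentiable ℝ fun y => pd k (pd k f) y - pd k V y * pd k f y := fun k =>
    (differentiable_pd (hpdf k) k).fun_sub
      ((differentiable_pd hV k).fun_mul (differentiable_pd hf2 k))
  rw [funext (Lop_eq_sum V f), pd_sum _ fun k _ => hterm k, Lop_eq_sum, ← Finset.sum_sub_distrib]
  refine Finset.sum_congr rfl fun k _ => ?_
  rw [pd_sub (differentiable_pd (hpdf k) k)
      ((differentiable_pd hV k).fun_mul (differentiable_pd hf2 k)),
    pd_mul (differentiable_pd hV k) (differentiable_pd hf2 k), pd_comm (hpdf k), pd_comm hf2 i k]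
  ring

lemma gradv_Lop {f : Euc d → ℝ} (hV : ContDiff ℝ 2 V) (hf : ContDiff ℝ 3 f) (x : Euc d) :
    gradv (Lop V f) x = vecL V (gradv f) x - hessM V x *ᵥ gradv f x :=
  funext fun i => pd_Lop V hV hf i x

lemma vecL_mulVec {M : Euc d → Matrix (Fin d) (Fin d) ℝ} {F : Euc d → Euc d}
    (hM : ∀ i j, ContDiff ℝ 2 fun y => M y i j) (hF : ∀ j, ContDiff ℝ 2 fun y => F y j)
    (x : Euc d) :
    vecL V (fun y => M y *ᵥ F y) x
      = matL V M x *ᵥ F x + M x *ᵥ vecL V F x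
        + (2 : ℝ) • fun i => ∑ j, ∑ k, pd k (fun y => M y i j) x * pd k (fun y => F y j) x := by
  ext i
  change Lop V (fun y => ∑ j, M y i j * F y j) x = _
  rw [Lop_sum V _ fun j _ => (hM i j).mul (hF j)]
  simp only [Lop_mul V (hM _ _) (hF _), Finset.sum_add_distrib, Finset.mul_sum, Pi.add_apply,
    Pi.smul_apply, smul_eq_mul, Matrix.mulVec, dotProduct, matL, vecL, Matrix.of_apply]
  ring

end DiffusionOperator

section MatrixSmoothness

variable {E : Type*} [NormedAddCommGroup E] [NormedSpace ℝ E] {ι : Type*} [Fintype ι]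
  [DecidableEq ι] {n : WithTop ℕ∞} {M : E → Matrix ι ι ℝ}

lemma contDiff_det (hM : ∀ i j, ContDiff ℝ n fun y => M y i j) :
    ContDiff ℝ n fun y => (M y).det := by
  simp only [Matrix.det_apply, Units.smul_def, zsmul_eq_mul]
  exact ContDiff.sum fun σ _ => contDiff_const.mul (contDiff_prod fun i _ => hM (σ i) i)

lemma contDiff_inv_apply (hM : ∀ i j, ContDiff ℝ n fun y => M y i j)
    (hdet : ∀ y, IsUnit (M y).det) (i j : ι) :
    ContDiff ℝ n fun y => (M y)⁻¹ i j := by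
  have hadj : ContDiff ℝ n fun y => (M y).adjugate i j := by
    simp only [Matrix.adjugate_apply]
    refine contDiff_det fun k l => ?_
    by_cases h : k = j <;> simp [Matrix.updateRow_apply, h, contDiff_const, hM]
  simp only [Matrix.inv_def, Matrix.smul_apply, Ring.inverse_eq_inv', smul_eq_mul]
  exact ((contDiff_det hM).inv fun y => (hdet y).ne_zero).mul hadj

end MatrixSmoothness

theorem stmt_0_general {d : ℕ} (V : Euc d → ℝ) (hV : ContDiff ℝ (⊤ : ℕ∞) V)
    (A : Euc d → Matrix (Fin d) (Fin d) ℝ)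
    (hA : ∀ i j, ContDiff ℝ (⊤ : ℕ∞) fun x => A x i j)
    (hAinv : ∀ x, IsUnit (A x).det)
    (f : Euc d → ℝ) (hf : ContDiff ℝ (⊤ : ℕ∞) f) (x : Euc d) :
    A x *ᵥ gradv (Lop V f) x
      = LA V A (fun y => A y *ᵥ gradv f y) x - MA V A x *ᵥ (A x *ᵥ gradv f x) := by
  set F : Euc d → Euc d := fun y => A y *ᵥ gradv f y
  have hF : ∀ i, ContDiff ℝ 2 fun y => F y i := fun i => by
    have hFi : ContDiff ℝ ∞ fun y => ∑ j, A y i j * pd j f y :=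
      ContDiff.sum fun j _ => (hA i j).mul (contDiff_pd hf j)
    exact hFi.of_le (by norm_cast)
  have hAinv_smooth : ∀ i j, ContDiff ℝ 2 fun y => (A y)⁻¹ i j := fun i j =>
    (contDiff_inv_apply hA hAinv i j).of_le (by norm_cast)
  have hgrad : gradv f = fun y => (A y)⁻¹ *ᵥ F y := funext fun y => by
    simp [F, Matrix.mulVec_mulVec, Matrix.nonsing_inv_mul _ (hAinv y)]
  have hvecL : vecL V (gradv f) x = matL V (fun y => (A y)⁻¹) x *ᵥ F x
      + (A x)⁻¹ *ᵥ vecL V F x + (2 : ℝ) • gAinvG A F x := by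
    rw [hgrad]
    exact vecL_mulVec V hAinv_smooth hF x
  rw [gradv_Lop V (hV.of_le (by norm_cast)) (hf.of_le (by norm_cast)), hvecL, LA, MA,
    congrFun hgrad x]
  simp only [Matrix.mulVec_add, Matrix.mulVec_sub, Matrix.mulVec_smul, Matrix.sub_mulVec,
    Matrix.mulVec_mulVec, Matrix.mul_assoc, Matrix.mul_nonsing_inv _ (hAinv x),
    Matrix.one_mulVec]
  abel

/-- the intertwining identity `A ∇(L f) = 𝕃_A(A∇f) - M_A (A∇f)` holds pointwise. -/
theorem stmt_0 {d : ℕ} (hd : 1 ≤ d) (V : Euc d → ℝ) (hV : ContDiff ℝ (⊤ : ℕ∞) V)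
    (A : Euc d → Matrix (Fin d) (Fin d) ℝ)
    (hA : ∀ i j, ContDiff ℝ (⊤ : ℕ∞) fun x => A x i j)
    (hAinv : ∀ x, IsUnit (A x).det)
    (f : Euc d → ℝ) (hf : ContDiff ℝ (⊤ : ℕ∞) f) (x : Euc d) :
    A x *ᵥ gradv (Lop V f) x
      = LA V A (fun y => A y *ᵥ gradv f y) x - MA V A x *ᵥ (A x *ᵥ gradv f x) :=
  stmt_0_general V hV A hA hAinv f hf x

end
end

section
/- (Key matrix lower bound for Proposition 4.1.) Let U_1,…,U_d : ℝ → ℝ be smooth and convex and φ : ℝ^d → ℝ smooth. Assume there are constants c_1 ∈ ℝ, c_2 > 0, γ > 0 and ε_1,…,ε_d ∈ (0,1/2) such that: ∇²φ(x) ⪰ c_1·I for all x; |∂_i φ(x)| ≤ c_2 for all x and all i; and (1 − 3ε_i/2)(1 − 2ε_i)² (U_i''(y) + ε_i U_i'(y)²) ≥ γ for all y ∈ ℝ and all i. Then for every x ∈ ℝ^d, the symmetric matrix ∇²φ(x) + D(x), where D(x) is diagonal with entries D_{ii}(x) = (1 − ε_i)(U_i''(x_i) + ε_i U_i'(x_i)²)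 + ε_i (∂_i φ(x)) U_i'(x_i), satisfies ∇²φ(x) + D(x) ⪰ (γ + c_1 − c_2²/2)·I. -/
open Real MeasureTheory Matrix

noncomputable section

/-! Since `∇²φ - c₁ I ⪰ 0`, it suffices that every diagonal entry satisfies
`D_ii ≥ γ - c₂²/2`. Convexity gives `U_i'' ≥ 0`, AM-GM bounds the cross term
`ε_i ∂_iφ U_i'` below by `-(c₂² + ε_i² U_i'²)/2`, and since
`(1 - 3ε/2)(1 - 2ε)² ≤ min (1 - ε) (1 - 3ε/2)` on `[0, 1/2]`, the hypothesis on `U_i`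
absorbs the rest. -/

lemma ConvexOn.deriv_deriv_nonneg {f : ℝ → ℝ} (hf : ConvexOn ℝ Set.univ f)
    (hd : Differentiable ℝ f) (y : ℝ) : 0 ≤ deriv (deriv f) y :=
  (monotoneOn_univ.1 (hf.monotoneOn_deriv fun z _ => hd z)).deriv_nonneg

lemma Matrix.PosSemidef.add_diagonal_sub_smul_one {n R : Type*} [Fintype n] [DecidableEq n]
    [CommRing R] [PartialOrder R] [StarRing R] [StarOrderedRing R]
    {A : Matrix n n R} {c r : R} {D : n → R}
    (hA : (A - c • (1 : Matrix n n R)).PosSemidef) (hD : ∀ i, r - c ≤ D i) :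
    (A + diagonal D - r • (1 : Matrix n n R)).PosSemidef := by
  have hsplit : A + diagonal D - r • (1 : Matrix n n R)
      = (A - c • (1 : Matrix n n R)) + diagonal fun i => D i - (r - c) := by
    ext i j
    rcases eq_or_ne i j with rfl | hij
    · simp only [add_apply, sub_apply, smul_apply, one_apply_eq, diagonal_apply_eq, smul_eq_mul]
      ring
    · simp [one_apply_ne hij, diagonal_apply_ne _ hij]
  rw [hsplit]
  exact hA.add (posSemidef_diagonal_iff.2 fun i => sub_nonneg.2 (hD i))

lemma sub_sq_div_two_le_diagonal_term {e a b p c γ : ℝ} (he₀ : 0 ≤ e) (he : e ≤ 1 / 2)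
    (ha : 0 ≤ a) (hp : |p| ≤ c)
    (hγ : γ ≤ (1 - 3 * e / 2) * (1 - 2 * e) ^ 2 * (a + e * b ^ 2)) :
    γ - c ^ 2 / 2 ≤ (1 - e) * (a + e * b ^ 2) + e * p * b := by
  have hp_sq : p ^ 2 ≤ c ^ 2 := by
    simpa only [sq_abs] using pow_le_pow_left₀ (abs_nonneg p) hp 2
  have hcross : -(c ^ 2 + e ^ 2 * b ^ 2) / 2 ≤ e * p * b := by
    nlinarith [two_mul_le_add_sq (-p) (e * b)]
  have hweight : (1 - 3 * e / 2) * (1 - 2 * e) ^ 2 ≤ 1 - 3 * e / 2 := by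
    refine mul_le_of_le_one_right (by linarith) ?_
    nlinarith
  have hγ' : γ ≤ (1 - e) * a + (1 - 3 * e / 2) * (e * b ^ 2) := by
    have heb : 0 ≤ e * b ^ 2 := by positivity
    nlinarith [mul_le_mul_of_nonneg_right hweight ha, mul_le_mul_of_nonneg_right hweight heb]
  nlinarith

theorem stmt_17_general {d : ℕ}
    (U : Fin d → ℝ → ℝ) (hU : ∀ i, ContDiff ℝ (⊤ : ℕ∞) (U i))
    (hUconv : ∀ i, ConvexOn ℝ Set.univ (U i))
    (φ : Euc d → ℝ)
    (c₁ c₂ γ : ℝ)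
    (ε : Fin d → ℝ) (hε : ∀ i, ε i ∈ Set.Ioo (0 : ℝ) (1 / 2))
    (hφlb : ∀ x : Euc d,
      (hessM φ x - c₁ • (1 : Matrix (Fin d) (Fin d) ℝ)).PosSemidef)
    (hφgrad : ∀ (x : Euc d) (i : Fin d), |pd i φ x| ≤ c₂)
    (hUlb : ∀ (i : Fin d) (y : ℝ),
      γ ≤ (1 - 3 * ε i / 2) * (1 - 2 * ε i) ^ 2
        * (deriv (deriv (U i)) y + ε i * deriv (U i) y ^ 2))
    (x : Euc d) :
    ((hessM φ x + Matrix.diagonal (fun i =>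
        (1 - ε i) * (deriv (deriv (U i)) (x i) + ε i * deriv (U i) (x i) ^ 2)
        + ε i * pd i φ x * deriv (U i) (x i)))
      - (γ + c₁ - c₂ ^ 2 / 2) • (1 : Matrix (Fin d) (Fin d) ℝ)).PosSemidef := by
  refine (hφlb x).add_diagonal_sub_smul_one fun i => ?_
  have hU'' : 0 ≤ deriv (deriv (U i)) (x i) :=
    (hUconv i).deriv_deriv_nonneg ((hU i).differentiable (by simp)) (x i)
  have hentry := sub_sq_div_two_le_diagonal_term (hε i).1.le (hε i).2.le hU'' (hφgrad x i)
    (hUlb i (x i))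
  linarith

/-- key matrix lower bound: `∇²φ(x) + D(x) ⪰ (γ + c₁ - c₂²/2)·I`. -/
theorem stmt_17 {d : ℕ} (hd : 1 ≤ d)
    (U : Fin d → ℝ → ℝ) (hU : ∀ i, ContDiff ℝ (⊤ : ℕ∞) (U i))
    (hUconv : ∀ i, ConvexOn ℝ Set.univ (U i))
    (φ : Euc d → ℝ) (hφ : ContDiff ℝ (⊤ : ℕ∞) φ)
    (c₁ c₂ γ : ℝ) (hc₂ : 0 < c₂) (hγ : 0 < γ)
    (ε : Fin d → ℝ) (hε : ∀ i, ε i ∈ Set.Ioo (0 : ℝ) (1 / 2))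
    (hφlb : ∀ x : Euc d,
      (hessM φ x - c₁ • (1 : Matrix (Fin d) (Fin d) ℝ)).PosSemidef)
    (hφgrad : ∀ (x : Euc d) (i : Fin d), |pd i φ x| ≤ c₂)
    (hUlb : ∀ (i : Fin d) (y : ℝ),
      γ ≤ (1 - 3 * ε i / 2) * (1 - 2 * ε i) ^ 2
        * (deriv (deriv (U i)) y + ε i * deriv (U i) y ^ 2))
    (x : Euc d) :
    ((hessM φ x + Matrix.diagonal (fun i =>
        (1 - ε i) * (deriv (deriv (U i)) (x i) + ε i * deriv (U i) (x i) ^ 2)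
        + ε i * pd i φ x * deriv (U i) (x i)))
      - (γ + c₁ - c₂ ^ 2 / 2) • (1 : Matrix (Fin d) (Fin d) ℝ)).PosSemidef :=
  stmt_17_general U hU hUconv φ c₁ c₂ γ ε hε hφlb hφgrad hUlb x

end
end
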